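/- For every f ∈ L¹(Ω,μ) there exists a function Φ ∈ 𝒞_{VP,∞} such that Φ(|f|) ∈ L¹(Ω,μ). -/

import Mathlib

open MeasureTheory Filter Topology
open scoped ENNReal


namespace CVP

/-- The basic building block: `T x = x arctan x - (1/2) log (1+x²)`, a primitive of `arctan`. -/
noncomputable def T (x : ℝ) : ℝ := x * Real.arctan x - (1/2) * Real.log (1 + x^2)

lemma hasDerivAt_T (x : ℝ) : HasDerivAt T (Real.arctan x) x := by
  have h1 : (0:ℝ) < 1 + x^2 := by positivity
  have hlog : HasDerivAt (fun y : ℝ => Real.log (1 + y^2)) (2*x / (1+x^2)) x := by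
    have hinner : HasDerivAt (fun y : ℝ => 1 + y^2) (2*x) x := by
      simpa using ((hasDerivAt_pow 2 x).const_add 1)
    simpa [div_eq_mul_inv, mul_comm, Function.comp_def] using (Real.hasDerivAt_log h1.ne').comp x hinner
  have hmul : HasDerivAt (fun y : ℝ => y * Real.arctan y)
      (1 * Real.arctan x + x * (1 / (1 + x^2))) x :=
    (hasDerivAt_id x).mul (Real.hasDerivAt_arctan x)
  have := hmul.sub (hlog.const_mul (1/2:ℝ))
  refine this.congr_deriv ?_
  field_simp
  ring

lemma T_zero : T 0 = 0 := by simp [T]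

lemma T_even (x : ℝ) : T (-x) = T x := by
  simp [T, Real.arctan_neg]

lemma deriv_T : deriv T = Real.arctan := funext fun x => (hasDerivAt_T x).deriv

lemma arctan_nonneg {x : ℝ} (hx : 0 ≤ x) : 0 ≤ Real.arctan x := by
  simpa [Real.arctan_zero] using Real.arctan_strictMono.monotone hx

lemma arctan_le_self {x : ℝ} (hx : 0 ≤ x) : Real.arctan x ≤ x := by
  have hmono : MonotoneOn (fun y : ℝ => y - Real.arctan y) (Set.Ici 0) := by
    apply monotoneOn_of_deriv_nonneg (convex_Ici 0)
    · exact (continuous_id.sub Real.continuous_arctan).continuousOn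
    · intro y _
      exact ((differentiable_id.sub Real.differentiable_arctan) y).differentiableWithinAt
    · intro y _
      have : deriv (fun y : ℝ => y - Real.arctan y) y = 1 - 1/(1+y^2) :=
        ((hasDerivAt_id y).sub (Real.hasDerivAt_arctan y)).deriv
      rw [this]
      have h1 : (0:ℝ) < 1 + y^2 := by positivity
      have : 1/(1+y^2) ≤ 1 := by
        rw [div_le_one h1]; nlinarith
      linarith
  have := hmono (Set.self_mem_Ici) hx hx
  simp only [Real.arctan_zero, sub_zero] at this
  linarith

lemma abs_arctan_le (x : ℝ) : |Real.arctan x| ≤ |x| := by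
  rcases le_or_gt 0 x with h | h
  · rw [abs_of_nonneg (arctan_nonneg h), abs_of_nonneg h]; exact arctan_le_self h
  · have h' : 0 ≤ -x := by linarith
    have := arctan_le_self h'
    rw [Real.arctan_neg] at this
    have ha : Real.arctan x ≤ 0 := by
      have := arctan_nonneg h'
      rw [Real.arctan_neg] at this; linarith
    rw [abs_of_nonpos ha, abs_of_neg h]; linarith

lemma arctan_lt_two (x : ℝ) : Real.arctan x < 2 := by
  have := Real.arctan_lt_pi_div_two x
  have hpi : Real.pi < 4 := by
    have := Real.pi_lt_d2; linarith
  linarith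

lemma T_nonneg (x : ℝ) : 0 ≤ T x := by
  have key : ∀ y : ℝ, 0 ≤ y → 0 ≤ T y := by
    intro y hy
    have hmono : MonotoneOn T (Set.Ici 0) := by
      apply monotoneOn_of_deriv_nonneg (convex_Ici 0)
      · exact fun z _ => ((hasDerivAt_T z).continuousAt).continuousWithinAt
      · exact fun z _ => (hasDerivAt_T z).differentiableAt.differentiableWithinAt
      · intro z hz
        rw [deriv_T]
        rw [interior_Ici] at hz
        exact arctan_nonneg (le_of_lt hz)
    have := hmono Set.self_mem_Ici hy hy
    rwa [T_zero] at this
  rcases le_or_gt 0 x with h | h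
  · exact key x h
  · have := key (-x) (by linarith)
    rwa [T_even] at this

lemma T_le_mul_arctan {x : ℝ} (hx : 0 ≤ x) : T x ≤ x * Real.arctan x := by
  have : 0 ≤ Real.log (1 + x^2) := Real.log_nonneg (by nlinarith)
  simp only [T]; nlinarith

lemma T_le_sq (x : ℝ) : T x ≤ x^2 := by
  have key : ∀ y : ℝ, 0 ≤ y → T y ≤ y^2 := by
    intro y hy
    calc T y ≤ y * Real.arctan y := T_le_mul_arctan hy
      _ ≤ y * y := by
          apply mul_le_mul_of_nonneg_left (arctan_le_self hy) hy
      _ = y^2 := (sq y).symm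
  rcases le_or_gt 0 x with h | h
  · exact key x h
  · have := key (-x) (by linarith)
    rw [T_even] at this; simpa using this


/-- Complex version of `T`. -/
noncomputable def Tc (w : ℂ) : ℂ := w * Complex.arctan w - (1/2 : ℂ) * Complex.log (1 + w^2)

/-- The horizontal strip `|Im z| < 1/2`. -/
def S : Set ℂ := Complex.im ⁻¹' (Set.Ioo (-(1/2)) (1/2))

lemma isOpen_S : IsOpen S := isOpen_Ioo.preimage Complex.continuous_im

lemma ofReal_mem_S (x : ℝ) : (x : ℂ) ∈ S := by
  simp only [S, Set.mem_preimage, Complex.ofReal_im, Set.mem_Ioo]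
  norm_num

lemma abs_im_lt {w : ℂ} (hw : w ∈ S) : |w.im| < 1/2 := by
  rcases hw with ⟨h1, h2⟩
  rw [abs_lt]
  exact ⟨by linarith, by linarith⟩

lemma div_mem_S {z : ℂ} (hz : z ∈ S) {c : ℝ} (hc : 1 ≤ c) : z / (c : ℂ) ∈ S := by
  have hc0 : (0:ℝ) < c := lt_of_lt_of_le one_pos hc
  have him : (z / (c:ℂ)).im = z.im / c := by
    rw [Complex.div_im]
    simp [Complex.normSq_apply]
    field_simp
  have h1 : |z.im / c| ≤ |z.im| := by
    rw [abs_div, abs_of_pos hc0]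
    calc |z.im| / c ≤ |z.im| / 1 := by
          apply div_le_div_of_nonneg_left (abs_nonneg _) one_pos hc
      _ = |z.im| := div_one _
  have h2 := abs_im_lt hz
  simp only [S, Set.mem_preimage, Set.mem_Ioo, him]
  constructor
  · have := (abs_le.mp h1).1; linarith [neg_abs_le (z.im), (abs_lt.mp h2).1,
      (abs_le.mp h1).1]
  · linarith [(abs_le.mp h1).2, (abs_lt.mp h2).2]

lemma one_sub_mul_I_ne {w : ℂ} (hw : w ∈ S) : (1 - w * Complex.I) ≠ 0 := by
  intro h
  have h2 : (1 - w * Complex.I).re = 0 := by rw [h]; simp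
  have h3 := abs_im_lt hw
  rw [abs_lt] at h3
  simp only [Complex.sub_re, Complex.one_re, Complex.mul_re, Complex.I_re, Complex.I_im,
    mul_zero, mul_one] at h2
  linarith [h3.1, h3.2]

lemma one_add_mul_I_ne {w : ℂ} (hw : w ∈ S) : (1 + w * Complex.I) ≠ 0 := by
  intro h
  have h2 : (1 + w * Complex.I).re = 0 := by rw [h]; simp
  have h3 := abs_im_lt hw
  rw [abs_lt] at h3
  simp only [Complex.add_re, Complex.one_re, Complex.mul_re, Complex.I_re, Complex.I_im,
    mul_zero, mul_one] at h2
  linarith [h3.1, h3.2]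

lemma quotient_mem_slitPlane {w : ℂ} (hw : w ∈ S) :
    (1 + w * Complex.I) / (1 - w * Complex.I) ∈ Complex.slitPlane := by
  set a := w.re
  set b := w.im
  have hb : |b| < 1/2 := abs_im_lt hw
  rw [abs_lt] at hb
  have hne := one_sub_mul_I_ne hw
  rw [Complex.mem_slitPlane_iff]
  have hre : ((1 + w * Complex.I) / (1 - w * Complex.I)).re =
      ((1-b)*(1+b) + a*(-a)) / Complex.normSq (1 - w * Complex.I) := by
    rw [Complex.div_re]
    congr 1
    · simp [Complex.add_re, Complex.mul_re, Complex.add_im, Complex.mul_im, a, b]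
      ring
  have him : ((1 + w * Complex.I) / (1 - w * Complex.I)).im =
      (a*(1+b) + (1-b)*a) / Complex.normSq (1 - w * Complex.I) := by
    rw [Complex.div_im]
    congr 1
    · simp [Complex.add_re, Complex.mul_re, Complex.add_im, Complex.mul_im, a, b]
      ring
  have hnsq : 0 < Complex.normSq (1 - w * Complex.I) := Complex.normSq_pos.mpr hne
  rcases eq_or_ne a 0 with ha | ha
  · left
    rw [hre, ha]
    apply div_pos _ hnsq
    nlinarith
  · right
    rw [him]
    have : a*(1+b) + (1-b)*a = 2*a := by ring
    rw [this]
    exact div_ne_zero (by simpa using ha) hnsq.ne'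

lemma one_add_sq_mem_slitPlane {w : ℂ} (hw : w ∈ S) : 1 + w^2 ∈ Complex.slitPlane := by
  have hb : |w.im| < 1/2 := abs_im_lt hw
  rw [abs_lt] at hb
  rw [Complex.mem_slitPlane_iff]
  left
  have : (1 + w^2).re = 1 + (w.re*w.re - w.im*w.im) := by
    simp [sq, Complex.add_re, Complex.mul_re]
  rw [this]
  nlinarith

lemma differentiableAt_arctanC {w : ℂ} (hw : w ∈ S) :
    DifferentiableAt ℂ Complex.arctan w := by
  have h1 : DifferentiableAt ℂ (fun z : ℂ => (1 + z * Complex.I) / (1 - z * Complex.I)) w := by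
    apply DifferentiableAt.div
    · exact (differentiableAt_const _).add (differentiableAt_id.mul (differentiableAt_const _))
    · exact (differentiableAt_const _).sub (differentiableAt_id.mul (differentiableAt_const _))
    · exact one_sub_mul_I_ne hw
  have h2 : DifferentiableAt ℂ
      (fun z : ℂ => -Complex.I / 2 * Complex.log ((1 + z * Complex.I) / (1 - z * Complex.I))) w :=
    (h1.clog (quotient_mem_slitPlane hw)).const_mul _
  exact h2.congr_of_eventuallyEq (Filter.Eventually.of_forall fun z => rfl)

lemma differentiableAt_Tc {w : ℂ} (hw : w ∈ S) : DifferentiableAt ℂ Tc w := by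
  apply DifferentiableAt.sub
  · exact differentiableAt_id.mul (differentiableAt_arctanC hw)
  · apply DifferentiableAt.const_mul
    exact DifferentiableAt.clog ((differentiableAt_const _).add (differentiableAt_pow 2))
      (one_add_sq_mem_slitPlane hw)

lemma norm_arctanC_le {w : ℂ} (hw : ‖w‖ ≤ 1/2) : ‖Complex.arctan w‖ ≤ 2 * ‖w‖ := by
  have hw1 : ‖w‖ < 1 := lt_of_le_of_lt hw (by norm_num)
  have haux := Complex.hasSum_arctan_aux hw1
  have harctan : Complex.arctan w =
      -Complex.I / 2 * (Complex.log (1 + w * Complex.I) + -Complex.log (1 - w * Complex.I)) := by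
    rw [haux]; rfl
  rw [harctan]
  rw [norm_mul]
  have hnI : ‖-Complex.I / 2‖ = 1/2 := by simp
  rw [hnI]
  have hwI : ‖w * Complex.I‖ = ‖w‖ := by simp
  have b1 : ‖Complex.log (1 + w * Complex.I)‖ ≤ 3/2 * ‖w‖ := by
    have := Complex.norm_log_one_add_half_le_self (z := w * Complex.I) (by rw [hwI]; exact hw)
    rwa [hwI] at this
  have b2 : ‖Complex.log (1 - w * Complex.I)‖ ≤ 3/2 * ‖w‖ := by
    have h' : ‖-(w * Complex.I)‖ ≤ 1/2 := by rw [norm_neg, hwI]; exact hw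
    have := Complex.norm_log_one_add_half_le_self (z := -(w * Complex.I)) h'
    rw [norm_neg, hwI] at this
    rwa [← sub_eq_add_neg] at this
  calc 1/2 * ‖Complex.log (1 + w * Complex.I) + -Complex.log (1 - w * Complex.I)‖
      ≤ 1/2 * (‖Complex.log (1 + w * Complex.I)‖ + ‖Complex.log (1 - w * Complex.I)‖) := by
        apply mul_le_mul_of_nonneg_left _ (by norm_num)
        calc ‖_ + -_‖ ≤ ‖_‖ + ‖-Complex.log (1 - w * Complex.I)‖ := norm_add_le _ _
          _ = _ + ‖Complex.log (1 - w * Complex.I)‖ := by rw [norm_neg]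
    _ ≤ 1/2 * (3/2 * ‖w‖ + 3/2 * ‖w‖) := by
        apply mul_le_mul_of_nonneg_left (add_le_add b1 b2) (by norm_num)
    _ ≤ 2 * ‖w‖ := by nlinarith [norm_nonneg w]

lemma norm_Tc_le {w : ℂ} (hw : ‖w‖ ≤ 1/2) : ‖Tc w‖ ≤ 3 * ‖w‖^2 := by
  have h1 : ‖w * Complex.arctan w‖ ≤ 2 * ‖w‖^2 := by
    rw [norm_mul]
    calc ‖w‖ * ‖Complex.arctan w‖ ≤ ‖w‖ * (2 * ‖w‖) :=
          mul_le_mul_of_nonneg_left (norm_arctanC_le hw) (norm_nonneg _)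
      _ = 2 * ‖w‖^2 := by ring
  have h2 : ‖(1/2 : ℂ) * Complex.log (1 + w^2)‖ ≤ 3/4 * ‖w‖^2 := by
    rw [norm_mul]
    have hsq : ‖w^2‖ ≤ 1/2 := by
      rw [norm_pow]
      nlinarith [norm_nonneg w]
    have := Complex.norm_log_one_add_half_le_self (z := w^2) hsq
    rw [norm_pow] at this
    have hh : ‖(1/2 : ℂ)‖ = 1/2 := by norm_num
    rw [hh]
    nlinarith [norm_nonneg (Complex.log (1 + w^2))]
  calc ‖Tc w‖ ≤ ‖w * Complex.arctan w‖ + ‖(1/2 : ℂ) * Complex.log (1 + w^2)‖ := norm_sub_le _ _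
    _ ≤ 2 * ‖w‖^2 + 3/4 * ‖w‖^2 := add_le_add h1 h2
    _ ≤ 3 * ‖w‖^2 := by nlinarith [norm_nonneg w]

/-- Generic: a series of functions holomorphic on the strip, with summable tail bounds on
`S ∩ ball 0 R` for every `R`, is analytic at every point of `S`. -/
lemma analyticAt_tsum (t : ℕ → ℂ → ℂ)
    (hdiff : ∀ k, ∀ w ∈ S, DifferentiableAt ℂ (t k) w)
    (hb : ∀ R : ℝ, 0 < R → ∃ (K : ℕ) (u : ℕ → ℝ), Summable u ∧
        ∀ (k : ℕ) (z : ℂ), z ∈ S → ‖z‖ < R → ‖t (k + K) z‖ ≤ u k)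
    {x : ℂ} (hx : x ∈ S) : AnalyticAt ℂ (fun z => ∑' k, t k z) x := by
  obtain ⟨K, u, hu, hub⟩ := hb (‖x‖ + 1) (by positivity)
  set U : Set ℂ := S ∩ Metric.ball 0 (‖x‖ + 1) with hU
  have hUo : IsOpen U := isOpen_S.inter Metric.isOpen_ball
  have hxU : x ∈ U := by
    refine ⟨hx, ?_⟩
    simp only [Metric.mem_ball, dist_zero_right]
    linarith
  have hnorm : ∀ z ∈ U, ‖z‖ < ‖x‖ + 1 := by
    intro z hz
    simpa [Metric.mem_ball, dist_zero_right] using hz.2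
  have hsummable : ∀ z ∈ U, Summable fun k => t k z := by
    intro z hz
    rw [← summable_nat_add_iff K]
    exact Summable.of_norm_bounded hu fun k => hub k z hz.1 (hnorm z hz)
  have htail : DifferentiableOn ℂ (fun z => ∑' k, t (k + K) z) U := by
    apply Complex.differentiableOn_tsum_of_summable_norm hu
      (fun k => fun z hz => (hdiff (k + K) z hz.1).differentiableWithinAt) hUo
    intro k z hz
    exact hub k z hz.1 (hnorm z hz)
  have hfin : DifferentiableOn ℂ (fun z => ∑ k ∈ Finset.range K, t k z) U := by
    apply DifferentiableOn.fun_sum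
    intro k _
    exact fun z hz => (hdiff k z hz.1).differentiableWithinAt
  have hdOn : DifferentiableOn ℂ (fun z => ∑' k, t k z) U := by
    apply (hfin.add htail).congr
    intro z hz
    exact (Summable.sum_add_tsum_nat_add K (hsummable z hz)).symm
  exact hdOn.analyticAt (hUo.mem_nhds hxU)

/-- Transfer: the real part of an analytic complex function along the reals is real-analytic. -/
lemma analyticAt_re_ofReal {g : ℂ → ℂ} {h : ℝ → ℝ} {x : ℝ}
    (hg : AnalyticAt ℂ g (x : ℂ)) (he : ∀ y : ℝ, h y = (g (y : ℂ)).re) :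
    AnalyticAt ℝ h x := by
  have h1 : AnalyticAt ℝ (fun y : ℝ => (y : ℂ)) x := Complex.ofRealCLM.analyticAt x
  have h2 : AnalyticAt ℝ g (x : ℂ) := hg.restrictScalars
  have h3 : AnalyticAt ℝ (fun z : ℂ => z.re) (g (x : ℂ)) := Complex.reCLM.analyticAt _
  have := (h3.comp h2).comp h1
  apply this.congr
  filter_upwards with y
  exact (he y).symm

section Series

variable {n : ℕ → ℝ}

/-- `φ(x) = Σ arctan(x / n_k)`. -/
noncomputable def phi (n : ℕ → ℝ) (x : ℝ) : ℝ := ∑' k, Real.arctan (x / n k)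

/-- `F = φ'`. -/
noncomputable def Fd (n : ℕ → ℝ) (x : ℝ) : ℝ := ∑' k, n k / ((n k)^2 + x^2)

/-- `Φ(x) = Σ n_k T(x / n_k)`, a primitive of `φ`. -/
noncomputable def Phi (n : ℕ → ℝ) (x : ℝ) : ℝ := ∑' k, n k * T (x / n k)

noncomputable def phic (n : ℕ → ℝ) (z : ℂ) : ℂ := ∑' k, Complex.arctan (z / (n k : ℂ))

noncomputable def Phic (n : ℕ → ℝ) (z : ℂ) : ℂ := ∑' k, (n k : ℂ) * Tc (z / (n k : ℂ))

variable (hn : ∀ k, 1 ≤ n k) (hsn : Summable fun k => (n k)⁻¹)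

include hn in
lemma n_pos (k : ℕ) : 0 < n k := lt_of_lt_of_le one_pos (hn k)

include hn hsn in
lemma summable_phi_term (x : ℝ) : Summable fun k => Real.arctan (x / n k) := by
  apply Summable.of_norm_bounded (g := fun k => |x| * (n k)⁻¹) (hsn.mul_left _)
  intro k
  rw [Real.norm_eq_abs]
  calc |Real.arctan (x / n k)| ≤ |x / n k| := abs_arctan_le _
    _ = |x| * (n k)⁻¹ := by
        rw [abs_div, div_eq_mul_inv, abs_of_pos (n_pos hn k)]

include hn hsn in
lemma summable_F_term (x : ℝ) : Summable fun k => n k / ((n k)^2 + x^2) := by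
  apply Summable.of_nonneg_of_le
    (fun k => div_nonneg (n_pos hn k).le (by nlinarith [n_pos hn k, sq_nonneg x])) _ hsn
  intro k
  have hk := n_pos hn k
  have hd : (0:ℝ) < (n k)^2 + x^2 := by nlinarith [sq_nonneg x]
  rw [div_le_iff₀ hd, inv_mul_eq_div, le_div_iff₀ hk]
  nlinarith

include hn hsn in
lemma summable_Phi_term (x : ℝ) : Summable fun k => n k * T (x / n k) := by
  apply Summable.of_nonneg_of_le
    (fun k => mul_nonneg (n_pos hn k).le (T_nonneg _)) _ (hsn.mul_left (x^2))
  intro k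
  have hk := n_pos hn k
  calc n k * T (x / n k) ≤ n k * (x / n k)^2 :=
        mul_le_mul_of_nonneg_left (T_le_sq _) hk.le
    _ = x^2 * (n k)⁻¹ := by field_simp

include hn hsn in
lemma hasDerivAt_phi (x : ℝ) : HasDerivAt (phi n) (Fd n x) x := by
  have h := hasDerivAt_tsum (u := fun k => (n k)⁻¹)
    (g := fun k y => Real.arctan (y / n k)) (g' := fun k y => n k / ((n k)^2 + y^2))
    (y₀ := 0) hsn ?_ ?_ ?_ x
  · exact h
  · intro k y
    have hk := n_pos hn k
    have h1 : HasDerivAt (fun y : ℝ => y / n k) (1 / n k) y := by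
      simpa using (hasDerivAt_id y).div_const (n k)
    have := (Real.hasDerivAt_arctan (y / n k)).comp y h1
    refine this.congr_deriv ?_
    have h2 : (0:ℝ) < 1 + (y / n k)^2 := by positivity
    field_simp
  · intro k y
    have hk := n_pos hn k
    have hd : (0:ℝ) < (n k)^2 + y^2 := by nlinarith [sq_nonneg y]
    rw [Real.norm_eq_abs, abs_of_nonneg (le_of_lt (div_pos hk hd))]
    rw [div_le_iff₀ hd, inv_mul_eq_div, le_div_iff₀ hk]
    nlinarith
  · exact summable_phi_term hn hsn 0

include hn hsn in
lemma hasDerivAt_Phi (x : ℝ) : HasDerivAt (Phi n) (phi n x) x := by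
  set R : ℝ := |x| + 1 with hR
  have hxR : x ∈ Metric.ball (0:ℝ) R := by
    simp only [Metric.mem_ball, dist_zero_right, Real.norm_eq_abs]
    linarith [abs_nonneg x]
  have h := hasDerivAt_tsum_of_isPreconnected (u := fun k => R * (n k)⁻¹)
    (g := fun k y => n k * T (y / n k)) (g' := fun k y => Real.arctan (y / n k))
    (hsn.mul_left R) Metric.isOpen_ball (convex_ball (0:ℝ) R).isPreconnected
    ?_ ?_ hxR ?_ hxR
  · exact h
  · intro k y _
    have hk := n_pos hn k
    have h1 : HasDerivAt (fun y : ℝ => y / n k) (1 / n k) y := by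
      simpa using (hasDerivAt_id y).div_const (n k)
    have := ((hasDerivAt_T (y / n k)).comp y h1).const_mul (n k)
    refine this.congr_deriv ?_
    field_simp
  · intro k y hy
    have hk := n_pos hn k
    simp only [Metric.mem_ball, dist_zero_right, Real.norm_eq_abs] at hy
    rw [Real.norm_eq_abs]
    calc |Real.arctan (y / n k)| ≤ |y / n k| := abs_arctan_le _
      _ = |y| * (n k)⁻¹ := by rw [abs_div, div_eq_mul_inv, abs_of_pos hk]
      _ ≤ R * (n k)⁻¹ := by
          apply mul_le_mul_of_nonneg_right hy.le (by positivity)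
  · exact summable_Phi_term hn hsn x

include hn hsn in
lemma phi_zero : phi n 0 = 0 := by
  simp [phi]

include hn hsn in
lemma phi_mono : Monotone (phi n) := by
  intro x y hxy
  apply Summable.tsum_le_tsum _ (summable_phi_term hn hsn x) (summable_phi_term hn hsn y)
  intro k
  apply Real.arctan_strictMono.monotone
  have hk := n_pos hn k
  gcongr

include hn hsn in
lemma phi_nonneg {x : ℝ} (hx : 0 ≤ x) : 0 ≤ phi n x := by
  have := phi_mono hn hsn hx
  rwa [phi_zero hn hsn] at this

include hn hsn in
lemma phi_pos {x : ℝ} (hx : 0 < x) : 0 < phi n x := by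
  have h0 : Real.arctan (x / n 0) ≤ phi n x := by
    apply Summable.le_tsum (summable_phi_term hn hsn x) 0
    intro j _
    exact arctan_nonneg (div_nonneg hx.le (n_pos hn j).le)
  have : 0 < Real.arctan (x / n 0) := by
    rw [← Real.arctan_zero]
    exact Real.arctan_strictMono (div_pos hx (n_pos hn 0))
  linarith

include hn hsn in
lemma F_antitoneOn : AntitoneOn (Fd n) (Set.Ici 0) := by
  intro x hx y hy hxy
  apply Summable.tsum_le_tsum _ (summable_F_term hn hsn y) (summable_F_term hn hsn x)
  intro k
  have hk := n_pos hn k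
  apply div_le_div_of_nonneg_left hk.le (by positivity)
  simp only [Set.mem_Ici] at hx hy
  nlinarith

include hn hsn in
lemma Phi_zero : Phi n 0 = 0 := by
  simp [Phi, T_zero]

include hn hsn in
lemma Phi_nonneg (x : ℝ) : 0 ≤ Phi n x :=
  tsum_nonneg fun k => mul_nonneg (n_pos hn k).le (T_nonneg _)

include hn hsn in
lemma Phi_le_mul {x : ℝ} (hx : 0 ≤ x) : Phi n x ≤ x * phi n x := by
  have : x * phi n x = ∑' k, x * Real.arctan (x / n k) := by
    rw [phi, ← tsum_mul_left]
  rw [this]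
  apply Summable.tsum_le_tsum _ (summable_Phi_term hn hsn x) ((summable_phi_term hn hsn x).mul_left x)
  intro k
  have hk := n_pos hn k
  have hw : 0 ≤ x / n k := by positivity
  calc n k * T (x / n k) ≤ n k * ((x / n k) * Real.arctan (x / n k)) :=
        mul_le_mul_of_nonneg_left (T_le_mul_arctan hw) hk.le
    _ = x * Real.arctan (x / n k) := by field_simp

include hn hsn in
lemma phi_tendsto_atTop : Tendsto (phi n) atTop atTop := by
  rw [tendsto_atTop_atTop]
  intro b
  set K : ℕ := 2 * (⌈b⌉₊ + 1) with hK
  set R : ℝ := (∑ k ∈ Finset.range K, n k) + 1 with hR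
  have hR0 : 0 ≤ ∑ k ∈ Finset.range K, n k :=
    Finset.sum_nonneg fun k _ => (n_pos hn k).le
  refine ⟨R, fun r hr => ?_⟩
  have hr0 : 0 < r := by
    have : (0:ℝ) < R := by positivity
    linarith
  have hsum : ∑ k ∈ Finset.range K, Real.arctan (r / n k) ≤ phi n r := by
    apply Summable.sum_le_tsum _ _ (summable_phi_term hn hsn r)
    intro j _
    exact arctan_nonneg (div_nonneg hr0.le (n_pos hn j).le)
  have hterm : ∀ k ∈ Finset.range K, Real.pi / 4 ≤ Real.arctan (r / n k) := by
    intro k hk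
    rw [← Real.arctan_one]
    apply Real.arctan_strictMono.monotone
    have hnk := n_pos hn k
    rw [le_div_iff₀ hnk, one_mul]
    have : n k ≤ ∑ j ∈ Finset.range K, n j :=
      Finset.single_le_sum (fun j _ => (n_pos hn j).le) hk
    linarith
  have hKsum : (K : ℝ) * (Real.pi / 4) ≤ ∑ k ∈ Finset.range K, Real.arctan (r / n k) := by
    calc (K : ℝ) * (Real.pi / 4) = ∑ _k ∈ Finset.range K, Real.pi / 4 := by
          simp [Finset.sum_const, mul_comm]
      _ ≤ _ := Finset.sum_le_sum hterm
  have hpi : (3:ℝ) < Real.pi := Real.pi_gt_three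
  have hb : b ≤ (K : ℝ) * (Real.pi / 4) := by
    have hceil : b ≤ (⌈b⌉₊ : ℝ) := Nat.le_ceil b
    have hKval : (K : ℝ) = 2 * ((⌈b⌉₊ : ℝ) + 1) := by
      rw [hK]; push_cast; ring
    nlinarith [Nat.cast_nonneg (α := ℝ) ⌈b⌉₊]
  linarith

include hn hsn in
lemma Phi_continuous : Continuous (Phi n) := by
  have : Differentiable ℝ (Phi n) := fun x => (hasDerivAt_Phi hn hsn x).differentiableAt
  exact this.continuous

include hn hsn in
lemma deriv_Phi : deriv (Phi n) = phi n := funext fun x => (hasDerivAt_Phi hn hsn x).deriv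

include hn hsn in
lemma deriv_phi : deriv (phi n) = Fd n := funext fun x => (hasDerivAt_phi hn hsn x).deriv

include hn hsn in
lemma convexOn_Phi : ConvexOn ℝ (Set.Ici 0) (Phi n) := by
  apply MonotoneOn.convexOn_of_deriv (convex_Ici 0) (Phi_continuous hn hsn).continuousOn
  · intro x _
    exact (hasDerivAt_Phi hn hsn x).differentiableAt.differentiableWithinAt
  · rw [deriv_Phi hn hsn]
    exact (phi_mono hn hsn).monotoneOn _

include hn hsn in
lemma concaveOn_phi : ConcaveOn ℝ (Set.Ici 0) (phi n) := by
  apply AntitoneOn.concaveOn_of_deriv (convex_Ici 0)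
  · exact fun x _ => (hasDerivAt_phi hn hsn x).continuousAt.continuousWithinAt
  · intro x _
    exact (hasDerivAt_phi hn hsn x).differentiableAt.differentiableWithinAt
  · rw [deriv_phi hn hsn]
    exact (F_antitoneOn hn hsn).mono (by rw [interior_Ici]; exact Set.Ioi_subset_Ici_self)

include hn hsn in
lemma Phi_div_tendsto_atTop : Tendsto (fun r => Phi n r / r) atTop atTop := by
  have hlower : ∀ r : ℝ, 1 ≤ r → phi n (r/2) / 2 ≤ Phi n r / r := by
    intro r hr
    have hr0 : 0 < r := by linarith
    have hhalf : r / 2 < r := by linarith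
    obtain ⟨c, hc, hceq⟩ := exists_hasDerivAt_eq_slope (Phi n) (phi n) hhalf
      (Phi_continuous hn hsn).continuousOn
      (fun x _ => hasDerivAt_Phi hn hsn x)
    have hc1 : phi n (r/2) ≤ phi n c := phi_mono hn hsn hc.1.le
    have hPhidiff : Phi n r - Phi n (r/2) = phi n c * (r - r/2) := by
      have hne : r - r/2 ≠ 0 := by linarith
      rw [eq_div_iff hne] at hceq
      linarith
    have h0 : 0 ≤ Phi n (r/2) := Phi_nonneg hn hsn _
    have key : phi n (r/2) * (r/2) ≤ Phi n r := by nlinarith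
    rw [div_le_div_iff₀ (by norm_num : (0:ℝ) < 2) hr0]
    nlinarith
  apply tendsto_atTop_mono' atTop ?_ ?_
  · exact fun r => phi n (r/2) / 2
  · filter_upwards [eventually_ge_atTop (1:ℝ)] with r hr
    exact hlower r hr
  · apply Tendsto.atTop_div_const (by norm_num)
    exact (phi_tendsto_atTop hn hsn).comp (tendsto_id.atTop_div_const (by norm_num))

include hn hsn in
lemma analyticAt_phic {x : ℂ} (hx : x ∈ S) : AnalyticAt ℂ (phic n) x := by
  apply analyticAt_tsum (hx := hx)
  · intro k w hw
    exact (differentiableAt_arctanC (div_mem_S hw (hn k))).comp (f := fun z : ℂ => z / ((n k : ℝ) : ℂ)) w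
      (differentiableAt_id.div_const _)
  · intro R hR
    have hev : ∀ᶠ j in atTop, (n j)⁻¹ < (2*R)⁻¹ :=
      hsn.tendsto_atTop_zero.eventually_lt_const (by positivity)
    obtain ⟨K, hK⟩ := hev.exists_forall_of_atTop
    refine ⟨K, fun k => 2*R * (n (k+K))⁻¹, ((summable_nat_add_iff K).mpr hsn).mul_left _, ?_⟩
    intro k z hz hzR
    have hk := n_pos hn (k+K)
    have h2R : 2*R < n (k+K) := by
      have := hK (k+K) (Nat.le_add_left K k)
      rwa [inv_lt_inv₀ (by positivity) (by positivity)] at this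
    have hnorm : ‖z / ((n (k+K) : ℝ) : ℂ)‖ = ‖z‖ / n (k+K) := by
      rw [norm_div, Complex.norm_real, Real.norm_eq_abs, abs_of_pos hk]
    have hwsmall : ‖z / ((n (k+K) : ℝ) : ℂ)‖ ≤ 1/2 := by
      rw [hnorm, div_le_iff₀ hk]
      nlinarith
    calc ‖Complex.arctan (z / ((n (k+K) : ℝ) : ℂ))‖ ≤ 2 * ‖z / ((n (k+K) : ℝ) : ℂ)‖ :=
          norm_arctanC_le hwsmall
      _ = 2 * ‖z‖ * (n (k+K))⁻¹ := by rw [hnorm]; field_simp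
      _ ≤ 2*R * (n (k+K))⁻¹ := by
          apply mul_le_mul_of_nonneg_right _ (by positivity)
          nlinarith

include hn hsn in
lemma analyticAt_Phic {x : ℂ} (hx : x ∈ S) : AnalyticAt ℂ (Phic n) x := by
  apply analyticAt_tsum (hx := hx)
  · intro k w hw
    apply DifferentiableAt.const_mul
    exact (differentiableAt_Tc (div_mem_S hw (hn k))).comp (f := fun z : ℂ => z / ((n k : ℝ) : ℂ)) w (differentiableAt_id.div_const _)
  · intro R hR
    have hev : ∀ᶠ j in atTop, (n j)⁻¹ < (2*R)⁻¹ :=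
      hsn.tendsto_atTop_zero.eventually_lt_const (by positivity)
    obtain ⟨K, hK⟩ := hev.exists_forall_of_atTop
    refine ⟨K, fun k => 3*R^2 * (n (k+K))⁻¹, ((summable_nat_add_iff K).mpr hsn).mul_left _, ?_⟩
    intro k z hz hzR
    have hk := n_pos hn (k+K)
    have h2R : 2*R < n (k+K) := by
      have := hK (k+K) (Nat.le_add_left K k)
      rwa [inv_lt_inv₀ (by positivity) (by positivity)] at this
    have hnorm : ‖z / ((n (k+K) : ℝ) : ℂ)‖ = ‖z‖ / n (k+K) := by
      rw [norm_div, Complex.norm_real, Real.norm_eq_abs, abs_of_pos hk]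
    have hwsmall : ‖z / ((n (k+K) : ℝ) : ℂ)‖ ≤ 1/2 := by
      rw [hnorm, div_le_iff₀ hk]
      nlinarith
    have hTc := norm_Tc_le hwsmall
    rw [norm_mul, Complex.norm_real, Real.norm_eq_abs, abs_of_pos hk]
    calc n (k+K) * ‖Tc (z / ((n (k+K) : ℝ) : ℂ))‖
        ≤ n (k+K) * (3 * ‖z / ((n (k+K) : ℝ) : ℂ)‖^2) :=
          mul_le_mul_of_nonneg_left hTc hk.le
      _ = 3 * ‖z‖^2 * (n (k+K))⁻¹ := by rw [hnorm]; field_simp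
      _ ≤ 3*R^2 * (n (k+K))⁻¹ := by
          apply mul_le_mul_of_nonneg_right _ (by positivity)
          nlinarith [norm_nonneg z]

lemma Tc_ofReal (y : ℝ) : Tc (y:ℂ) = ((T y : ℝ) : ℂ) := by
  unfold Tc T
  rw [← Complex.ofReal_arctan]
  have hlog : Complex.log ((1:ℂ) + (y:ℂ)^2) = ((Real.log (1 + y^2) : ℝ) : ℂ) := by
    rw [Complex.ofReal_log (by positivity)]
    norm_cast
  rw [hlog]
  push_cast
  ring

lemma phi_eq_re (x : ℝ) : phi n x = (phic n (x:ℂ)).re := by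
  have h1 : phic n (x:ℂ) = ((phi n x : ℝ) : ℂ) := by
    rw [phi, Complex.ofReal_tsum]
    unfold phic
    congr 1
    funext k
    rw [show ((x:ℂ) / ((n k : ℝ):ℂ)) = ((x / n k : ℝ) : ℂ) by push_cast; ring,
      ← Complex.ofReal_arctan]
  rw [h1, Complex.ofReal_re]

lemma Phi_eq_re (x : ℝ) : Phi n x = (Phic n (x:ℂ)).re := by
  have h1 : Phic n (x:ℂ) = ((Phi n x : ℝ) : ℂ) := by
    rw [Phi, Complex.ofReal_tsum]
    unfold Phic
    congr 1
    funext k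
    rw [show ((x:ℂ) / ((n k : ℝ):ℂ)) = ((x / n k : ℝ) : ℂ) by push_cast; ring, Tc_ofReal]
    push_cast
    ring
  rw [h1, Complex.ofReal_re]

include hn hsn in
lemma contDiffOn_Phi : ContDiffOn ℝ (⊤ : ℕ∞) (Phi n) (Set.Ici 0) := by
  have h : AnalyticOnNhd ℝ (Phi n) (Set.Ici 0) := by
    intro x _
    exact analyticAt_re_ofReal (analyticAt_Phic hn hsn (ofReal_mem_S x)) (Phi_eq_re)
  exact h.contDiffOn (uniqueDiffOn_Ici 0)

end Series
end CVP


open CVP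

/-- For every `f ∈ L¹(Ω, μ)` there is a function `Φ ∈ 𝒞_{VP,∞}` (that is,
a convex function `Φ ∈ C^∞([0,∞))` with `Φ(0) = Φ'(0) = 0`, `Φ'` concave, `Φ'(r) > 0` for `r > 0`,
and `Φ(r)/r → ∞`, `Φ'(r) → ∞` as `r → ∞`) such that `Φ(|f|) ∈ L¹(Ω, μ)`. -/
theorem exists_CVPinfty_integrable
    {Ω : Type*} [MeasurableSpace Ω] (μ : Measure Ω) [SigmaFinite μ]
    (f : Ω → ℝ) (hf : Integrable f μ) :
    ∃ Φ Φ' : ℝ → ℝ,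
      ContDiffOn ℝ (⊤ : ℕ∞) Φ (Set.Ici 0) ∧
      ConvexOn ℝ (Set.Ici 0) Φ ∧
      (∀ r ∈ Set.Ici (0:ℝ), HasDerivWithinAt Φ (Φ' r) (Set.Ici 0) r) ∧
      ConcaveOn ℝ (Set.Ici 0) Φ' ∧
      Φ 0 = 0 ∧ Φ' 0 = 0 ∧
      (∀ r : ℝ, 0 < r → 0 < Φ' r) ∧
      Tendsto (fun r => Φ r / r) atTop atTop ∧
      Tendsto Φ' atTop atTop ∧
      Integrable (fun x => Φ |f x|) μ := by
  classical
  have hg : AEMeasurable (fun x => |f x|) μ := hf.abs.aemeasurable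
  set G : Ω → ℝ := fun x => |hg.mk _ x| with hGdef
  have hGm : Measurable G := hg.measurable_mk.abs
  have hGe : (fun x => |f x|) =ᵐ[μ] G := by
    filter_upwards [hg.ae_eq_mk] with x hx
    simp only [G, ← hx, abs_abs]
  have hGnn : ∀ x, 0 ≤ G x := fun x => abs_nonneg _
  have hIfin : ∫⁻ x, ENNReal.ofReal (G x) ∂μ < ⊤ := by
    have h1 : ∫⁻ x, ENNReal.ofReal (G x) ∂μ = ∫⁻ x, ENNReal.ofReal |f x| ∂μ :=
      lintegral_congr_ae (by filter_upwards [hGe] with x hx; rw [hx])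
    rw [h1]
    have h2 := hf.2
    rw [hasFiniteIntegral_iff_norm] at h2
    simpa [Real.norm_eq_abs] using h2
  -- tail estimates
  have tail : ∀ k : ℕ, ∃ m : ℝ, 1 ≤ m ∧
      ∫⁻ x in {x | m < G x}, ENNReal.ofReal (G x) ∂μ ≤ (2:ℝ≥0∞)⁻¹ ^ k := by
    intro k
    have hmeas : ∀ m : ℕ, MeasurableSet {x | (m:ℝ) < G x} :=
      fun m => measurableSet_lt measurable_const hGm
    have htendsto : Tendsto (fun m : ℕ =>
        ∫⁻ x, Set.indicator {x | (m:ℝ) < G x} (fun x => ENNReal.ofReal (G x)) x ∂μ)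
        atTop (𝓝 0) := by
      have h0 : (0:ℝ≥0∞) = ∫⁻ _x, (0:ℝ≥0∞) ∂μ := lintegral_zero.symm
      rw [h0]
      apply tendsto_lintegral_of_dominated_convergence (fun x => ENNReal.ofReal (G x))
      · exact fun m => (hGm.ennreal_ofReal).indicator (hmeas m)
      · exact fun m => Filter.Eventually.of_forall fun x => Set.indicator_le_self _ _ x
      · exact hIfin.ne
      · apply Filter.Eventually.of_forall
        intro x
        apply tendsto_const_nhds.congr'
        filter_upwards [eventually_gt_atTop ⌈G x⌉₊] with mm hmm
        have hx : ¬ ((mm:ℝ) < G x) := by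
          push_neg
          calc G x ≤ (⌈G x⌉₊ : ℝ) := Nat.le_ceil _
            _ ≤ (mm:ℝ) := by exact_mod_cast (Nat.le_of_lt hmm)
        exact (Set.indicator_of_notMem (s := {x | (mm:ℝ) < G x}) (a := x) hx _).symm
    have hpos : (0:ℝ≥0∞) < (2:ℝ≥0∞)⁻¹ ^ k := ENNReal.pow_pos (by simp) k
    obtain ⟨N, hN⟩ := (htendsto.eventually_lt_const hpos).exists
    refine ⟨max (N:ℝ) 1, le_max_right _ _, ?_⟩
    have hsub : {x | max (N:ℝ) 1 < G x} ⊆ {x | (N:ℝ) < G x} := by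
      intro x hx
      have hx' : max (N:ℝ) 1 < G x := hx
      exact lt_of_le_of_lt (le_max_left _ _) hx'
    calc ∫⁻ x in {x | max (N:ℝ) 1 < G x}, ENNReal.ofReal (G x) ∂μ
        ≤ ∫⁻ x in {x | (N:ℝ) < G x}, ENNReal.ofReal (G x) ∂μ := lintegral_mono_set hsub
      _ = ∫⁻ x, Set.indicator {x | (N:ℝ) < G x} (fun x => ENNReal.ofReal (G x)) x ∂μ :=
          (lintegral_indicator (hmeas N) _).symm
      _ ≤ (2:ℝ≥0∞)⁻¹ ^ k := hN.le
  choose m hm1 hmtail using tail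
  set n : ℕ → ℝ := fun k => (m k + 1) * 2 ^ k with hndef
  have h2k : ∀ k : ℕ, (1:ℝ) ≤ 2^k := fun k => one_le_pow₀ (by norm_num)
  have hn : ∀ k, 1 ≤ n k := by
    intro k
    have h1 := hm1 k
    have h2 := h2k k
    simp only [n]
    nlinarith
  have h2n : ∀ k : ℕ, (2:ℝ)^k ≤ n k := by
    intro k
    have h1 := hm1 k
    have h2 : (0:ℝ) < 2^k := by positivity
    simp only [n]
    nlinarith
  have hsn : Summable fun k => (n k)⁻¹ := by
    apply Summable.of_nonneg_of_le
      (fun k => inv_nonneg.mpr (le_trans zero_le_one (hn k))) _ summable_geometric_two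
    intro k
    have h2 : (0:ℝ) < 2^k := by positivity
    calc (n k)⁻¹ ≤ ((2:ℝ)^k)⁻¹ := by
          apply inv_anti₀ h2 (h2n k)
      _ = (1/2:ℝ)^k := by rw [one_div, inv_pow]
  have hmn : ∀ k, m k / n k ≤ (1/2:ℝ)^k := by
    intro k
    have h1 := hm1 k
    have h2 : (0:ℝ) < 2^k := by positivity
    have hnk : (0:ℝ) < n k := lt_of_lt_of_le zero_lt_one (hn k)
    rw [div_le_iff₀ hnk]
    have he : (1/2:ℝ)^k = (2^k)⁻¹ := by rw [div_pow, one_pow, one_div]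
    rw [he]
    simp only [n]
    rw [inv_mul_eq_div, le_div_iff₀ h2]
    nlinarith
  -- pointwise bound for each term
  have pointwise : ∀ (k : ℕ) (x : Ω), ENNReal.ofReal (G x * Real.arctan (G x / n k)) ≤
      ENNReal.ofReal ((1/2:ℝ)^k * G x) +
      Set.indicator {x | m k < G x} (fun x => ENNReal.ofReal (2 * G x)) x := by
    intro k x
    have hnk : (0:ℝ) < n k := lt_of_lt_of_le zero_lt_one (hn k)
    rcases le_or_gt (G x) (m k) with hle | hlt
    · apply le_trans _ (le_add_of_nonneg_right zero_le)
      apply ENNReal.ofReal_le_ofReal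
      have h1 : Real.arctan (G x / n k) ≤ (1/2:ℝ)^k := by
        calc Real.arctan (G x / n k) ≤ G x / n k :=
              CVP.arctan_le_self (div_nonneg (hGnn x) hnk.le)
          _ ≤ m k / n k := by gcongr
          _ ≤ (1/2:ℝ)^k := hmn k
      calc G x * Real.arctan (G x / n k) ≤ G x * (1/2:ℝ)^k :=
            mul_le_mul_of_nonneg_left h1 (hGnn x)
        _ = (1/2:ℝ)^k * G x := mul_comm _ _
    · have hind : Set.indicator {x | m k < G x} (fun x => ENNReal.ofReal (2 * G x)) x
          = ENNReal.ofReal (2 * G x) :=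
        Set.indicator_of_mem (s := {x | m k < G x}) (a := x) hlt
          (fun x => ENNReal.ofReal (2 * G x))
      rw [hind]
      refine le_add_left (ENNReal.ofReal_le_ofReal ?_)
      have h2 : Real.arctan (G x / n k) ≤ 2 := (CVP.arctan_lt_two _).le
      calc G x * Real.arctan (G x / n k) ≤ G x * 2 :=
            mul_le_mul_of_nonneg_left h2 (hGnn x)
        _ = 2 * G x := mul_comm _ _
  have hofhalf : ∀ k : ℕ, ENNReal.ofReal ((1/2:ℝ)^k) = (2:ℝ≥0∞)⁻¹ ^ k := by
    intro k
    rw [ENNReal.ofReal_pow (by norm_num : (0:ℝ) ≤ 1/2)]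
    congr 1
    rw [one_div, ENNReal.ofReal_inv_of_pos (by norm_num)]
    norm_num
  set I : ℝ≥0∞ := ∫⁻ x, ENNReal.ofReal (G x) ∂μ with hI
  have perterm : ∀ k : ℕ, ∫⁻ x, ENNReal.ofReal (G x * Real.arctan (G x / n k)) ∂μ ≤
      (2:ℝ≥0∞)⁻¹^k * (I + 2) := by
    intro k
    have hmeasset : MeasurableSet {x | m k < G x} := measurableSet_lt measurable_const hGm
    have step1 : ∫⁻ x, ENNReal.ofReal (G x * Real.arctan (G x / n k)) ∂μ ≤
        ∫⁻ x, (ENNReal.ofReal ((1/2:ℝ)^k * G x) +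
          Set.indicator {x | m k < G x} (fun x => ENNReal.ofReal (2 * G x)) x) ∂μ :=
      lintegral_mono (pointwise k)
    have step2 : ∫⁻ x, (ENNReal.ofReal ((1/2:ℝ)^k * G x) +
          Set.indicator {x | m k < G x} (fun x => ENNReal.ofReal (2 * G x)) x) ∂μ =
        ∫⁻ x, ENNReal.ofReal ((1/2:ℝ)^k * G x) ∂μ +
        ∫⁻ x, Set.indicator {x | m k < G x} (fun x => ENNReal.ofReal (2 * G x)) x ∂μ :=
      lintegral_add_left ((hGm.const_mul _).ennreal_ofReal) _
    have step3 : ∫⁻ x, ENNReal.ofReal ((1/2:ℝ)^k * G x) ∂μ = (2:ℝ≥0∞)⁻¹^k * I := by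
      have he : ∀ x, ENNReal.ofReal ((1/2:ℝ)^k * G x) =
          (2:ℝ≥0∞)⁻¹^k * ENNReal.ofReal (G x) := by
        intro x
        rw [ENNReal.ofReal_mul (by positivity), hofhalf k]
      simp_rw [he]
      rw [lintegral_const_mul _ hGm.ennreal_ofReal]
    have step4 : ∫⁻ x, Set.indicator {x | m k < G x} (fun x => ENNReal.ofReal (2 * G x)) x ∂μ ≤
        2 * (2:ℝ≥0∞)⁻¹^k := by
      rw [lintegral_indicator hmeasset]
      have he : ∀ x, ENNReal.ofReal (2 * G x) = 2 * ENNReal.ofReal (G x) := by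
        intro x
        rw [ENNReal.ofReal_mul (by norm_num)]
        norm_num
      simp_rw [he]
      rw [lintegral_const_mul _ hGm.ennreal_ofReal]
      exact mul_le_mul_right (hmtail k) 2
    have step5 : ∫⁻ x, ENNReal.ofReal (G x * Real.arctan (G x / n k)) ∂μ ≤
        (2:ℝ≥0∞)⁻¹^k * I + 2 * (2:ℝ≥0∞)⁻¹^k := by
      refine (step1.trans_eq step2).trans ?_
      rw [step3]
      exact add_le_add le_rfl step4
    refine step5.trans (le_of_eq ?_)
    ring
  have hseries : ∫⁻ x, ENNReal.ofReal (Phi n (G x)) ∂μ < ⊤ := by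
    have h1 : ∀ x, ENNReal.ofReal (Phi n (G x)) ≤
        ∑' k, ENNReal.ofReal (G x * Real.arctan (G x / n k)) := by
      intro x
      have hb : Phi n (G x) ≤ G x * phi n (G x) := Phi_le_mul hn hsn (hGnn x)
      have h2 : G x * phi n (G x) = ∑' k, G x * Real.arctan (G x / n k) := by
        rw [phi, ← tsum_mul_left]
      calc ENNReal.ofReal (Phi n (G x)) ≤ ENNReal.ofReal (G x * phi n (G x)) :=
            ENNReal.ofReal_le_ofReal hb
        _ = ENNReal.ofReal (∑' k, G x * Real.arctan (G x / n k)) := by rw [h2]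
        _ = ∑' k, ENNReal.ofReal (G x * Real.arctan (G x / n k)) := by
            apply ENNReal.ofReal_tsum_of_nonneg
            · intro k
              exact mul_nonneg (hGnn x) (CVP.arctan_nonneg (div_nonneg (hGnn x)
                (le_trans zero_le_one (hn k))))
            · exact (summable_phi_term hn hsn (G x)).mul_left _
    calc ∫⁻ x, ENNReal.ofReal (Phi n (G x)) ∂μ
        ≤ ∫⁻ x, ∑' k, ENNReal.ofReal (G x * Real.arctan (G x / n k)) ∂μ := lintegral_mono h1
      _ = ∑' k, ∫⁻ x, ENNReal.ofReal (G x * Real.arctan (G x / n k)) ∂μ :=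
          lintegral_tsum fun k =>
            ((hGm.mul ((hGm.div_const _).arctan)).ennreal_ofReal).aemeasurable
      _ ≤ ∑' k : ℕ, (2:ℝ≥0∞)⁻¹^k * (I + 2) := ENNReal.tsum_le_tsum perterm
      _ = (∑' k : ℕ, (2:ℝ≥0∞)⁻¹^k) * (I + 2) := ENNReal.tsum_mul_right
      _ < ⊤ := by
          rw [ENNReal.tsum_geometric]
          apply ENNReal.mul_lt_top
          · rw [ENNReal.one_sub_inv_two]
            exact ENNReal.inv_lt_top.mpr (by norm_num)
          · exact ENNReal.add_lt_top.mpr ⟨hIfin, by norm_num⟩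
  -- conclusion
  have hint : Integrable (fun x => Phi n |f x|) μ := by
    constructor
    · exact (Phi_continuous hn hsn).comp_aestronglyMeasurable hf.abs.aestronglyMeasurable
    · rw [hasFiniteIntegral_iff_norm]
      have hcongr : ∫⁻ x, ENNReal.ofReal ‖Phi n |f x|‖ ∂μ =
          ∫⁻ x, ENNReal.ofReal (Phi n (G x)) ∂μ := by
        apply lintegral_congr_ae
        filter_upwards [hGe] with x hx
        rw [hx, Real.norm_eq_abs, abs_of_nonneg (Phi_nonneg hn hsn _)]
      rw [hcongr]
      exact hseries
  refine ⟨Phi n, phi n, contDiffOn_Phi hn hsn, convexOn_Phi hn hsn, ?_, concaveOn_phi hn hsn,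
    Phi_zero hn hsn, phi_zero hn hsn, ?_, Phi_div_tendsto_atTop hn hsn,
    phi_tendsto_atTop hn hsn, hint⟩
  · exact fun r _ => (hasDerivAt_Phi hn hsn r).hasDerivWithinAt
  · exact fun r hr => phi_pos hn hsn hr
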